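/- arXiv:1909.01253 — 3 statements merged into one kernel-verified Lean document; each statement's English description precedes it below -/
import Mathlib

section
/- For every real ε with 0 < ε and every integer l ≥ 1, if R and l are positive integers satisfying (1+ε)^R < binomial(R+l-1, l-1), then R ≤ l - 1 + 2(l-1)·(log(1/δ))/(log(1+ε)), where δ = sqrt(1+ε) - 1. -/
lemma choose_mul_pow_le' (n k : ℕ) (δ : ℝ) (hδ : 0 ≤ δ) :
    (n.choose k : ℝ) * δ ^ k ≤ (1 + δ) ^ n := by
  rcases le_or_gt k n with hk | hk
  · have h1 : (δ + 1) ^ n = ∑ i ∈ Finset.range (n + 1),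
        δ ^ i * (n.choose i : ℝ) := by
      rw [add_pow]; simp [mul_comm]
    rw [add_comm 1 δ, h1, mul_comm]
    exact Finset.single_le_sum (f := fun i => δ ^ i * (n.choose i : ℝ))
      (fun i _ => by positivity) (Finset.mem_range.mpr (Nat.lt_succ_of_le hk))
  · simp [Nat.choose_eq_zero_of_lt hk]
    positivity

/-- If `ε > 0`, `l ≥ 1`, `R ≥ 1` and `(1+ε)^R < (R+l-1).choose (l-1)`, then
`R ≤ l - 1 + 2(l-1) log(1/δ) / log(1+ε)` where `δ = √(1+ε) - 1`. -/
theorem stmt1 (ε : ℝ) (hε : 0 < ε) (l R : ℕ) (hl : 1 ≤ l) (hR : 0 < R)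
    (h : (1 + ε) ^ R < ((R + l - 1).choose (l - 1) : ℝ)) :
    (R : ℝ) ≤ (l : ℝ) - 1 +
      2 * ((l : ℝ) - 1) * Real.log (1 / (Real.sqrt (1 + ε) - 1)) / Real.log (1 + ε) := by
  set δ := Real.sqrt (1 + ε) - 1 with hδdef
  have h1ε : (0:ℝ) < 1 + ε := by linarith
  have hs : 1 < Real.sqrt (1 + ε) := by
    nlinarith [Real.sq_sqrt h1ε.le, Real.sqrt_nonneg (1 + ε)]
  have hδ : 0 < δ := by rw [hδdef]; linarith
  have h1δ : 1 + δ = Real.sqrt (1 + ε) := by rw [hδdef]; ring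
  have hsq : (1 + δ) ^ 2 = 1 + ε := by rw [h1δ]; exact Real.sq_sqrt h1ε.le
  set m := l - 1 with hm
  have hlm : (l : ℝ) - 1 = (m : ℝ) := by
    rw [hm]; push_cast [Nat.cast_sub hl]; ring
  have hRm : R + l - 1 = R + m := by omega
  have h1δpos : (0:ℝ) < 1 + δ := by linarith
  have key : (1 + δ) ^ (2 * R) * δ ^ m < (1 + δ) ^ (R + m) := by
    have hC : ((R + l - 1).choose (l - 1) : ℝ) * δ ^ m ≤ (1 + δ) ^ (R + m) := by
      rw [hm, ← hRm]
      exact choose_mul_pow_le' _ _ δ hδ.le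
    have h2 : (1 + ε) ^ R * δ ^ m < ((R + l - 1).choose (l - 1) : ℝ) * δ ^ m :=
      mul_lt_mul_of_pos_right h (pow_pos hδ _)
    calc (1 + δ) ^ (2 * R) * δ ^ m = (1 + ε) ^ R * δ ^ m := by
          rw [pow_mul, hsq]
      _ < _ := h2
      _ ≤ _ := hC
  have hlog := Real.log_lt_log (by positivity) key
  rw [Real.log_mul (by positivity) (by positivity), Real.log_pow, Real.log_pow, Real.log_pow] at hlog
  have hL : 0 < Real.log (1 + δ) := Real.log_pos (by linarith)
  have hlogε : Real.log (1 + ε) = 2 * Real.log (1 + δ) := by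
    rw [← hsq, Real.log_pow]; push_cast; ring
  have hinv : Real.log (1 / δ) = -Real.log δ := by rw [one_div, Real.log_inv]
  rw [hlm, hlogε, hinv]
  have hmain : ((R : ℝ) - m) * Real.log (1 + δ) < (m : ℝ) * (-Real.log δ) := by
    push_cast at hlog
    nlinarith [hlog]
  have hdiv : 2 * (m : ℝ) * (-Real.log δ) / (2 * Real.log (1 + δ))
      = (m : ℝ) * (-Real.log δ) / Real.log (1 + δ) := by
    field_simp
  rw [hdiv, ← sub_le_iff_le_add', le_div_iff₀ hL]
  linarith
end

section
/- Let α ∈ ℂ((1/t)) satisfy α^4 - α = 1/t with α = -1/t + O(1/t^2). Then for all p, q ∈ ℂ[t] with q ≠ 0 and |α - p/q| < 1 (1/t-adically), one has |α - p/q| ≥ e^{-1}/|q|^4, where |q| = e^{deg q}. -/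
open Polynomial HahnSeries

noncomputable abbrev Ku : LaurentSeries ℂ := HahnSeries.single (1 : ℤ) (1 : ℂ)

lemma Ku_ne : (Ku : LaurentSeries ℂ) ≠ 0 := single_ne_zero one_ne_zero

lemma Ku_inv : (Ku)⁻¹ = (HahnSeries.single (-1 : ℤ) (1 : ℂ) : LaurentSeries ℂ) := by
  refine inv_eq_of_mul_eq_one_right ?_
  rw [single_mul_single]
  norm_num [single_zero_one]

lemma coeff_sum' {ι : Type*} (s : Finset ι) (f : ι → LaurentSeries ℂ) (k : ℤ) :
    (∑ i ∈ s, f i).coeff k = ∑ i ∈ s, (f i).coeff k := by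
  classical
  induction s using Finset.cons_induction with
  | empty => simp
  | cons a s ha ih => rw [Finset.sum_cons, Finset.sum_cons, HahnSeries.coeff_add, ih]

lemma aeval_coeff (r : Polynomial ℂ) (k : ℤ) :
    (aeval (Ku)⁻¹ r).coeff k = if k ≤ 0 then r.coeff (-k).toNat else 0 := by
  rw [Polynomial.aeval_eq_sum_range]
  simp only [Algebra.smul_def]
  rw [coeff_sum']
  have hterm : ∀ i : ℕ, ((algebraMap ℂ (LaurentSeries ℂ)) (r.coeff i) * (Ku)⁻¹ ^ i).coeff k
      = if k = -(i : ℤ) then r.coeff i else 0 := by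
    intro i
    simp only [HahnSeries.algebraMap_apply', PowerSeries.algebraMap_apply,
      Algebra.algebraMap_self_apply, HahnSeries.ofPowerSeries_C]
    rw [Ku_inv, single_pow, nsmul_eq_mul, one_pow, HahnSeries.C_apply, single_mul_single, zero_add, mul_one,
      HahnSeries.coeff_single]
    split_ifs with h1 h2 h2
    · rfl
    · exact absurd (by omega : k = -(i:ℤ)) h2
    · exact absurd (by omega : k = (i:ℤ) * (-1)) (by simpa using h1)
    · rfl
  simp only [fun i => hterm i]
  by_cases hk : k ≤ 0
  · simp only [hk, if_true]
    have hiff : ∀ i : ℕ, (k = -(i : ℤ)) ↔ (i = (-k).toNat) := by intro i; omega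
    simp only [fun i => hiff i]
    rw [Finset.sum_ite_eq' (Finset.range (r.natDegree + 1)) ((-k).toNat) (fun i => r.coeff i)]
    split_ifs with hmem
    · rfl
    · rw [eq_comm, Polynomial.coeff_eq_zero_of_natDegree_lt]
      simp only [Finset.mem_range] at hmem; omega
  · simp only [hk, if_false]
    apply Finset.sum_eq_zero
    intro i _
    rw [if_neg]; omega

lemma aeval_ne_zero_of_ne {r : Polynomial ℂ} (hr : r ≠ 0) : aeval (Ku)⁻¹ r ≠ 0 := by
  intro h
  have := aeval_coeff r (-(r.natDegree : ℤ))
  rw [h] at this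
  simp only [HahnSeries.coeff_zero, if_pos (by omega : -(r.natDegree:ℤ) ≤ 0)] at this
  rw [show ((-(-(r.natDegree:ℤ))).toNat) = r.natDegree by omega] at this
  exact (Polynomial.leadingCoeff_ne_zero.mpr hr) this.symm

lemma aeval_order_le {r : Polynomial ℂ} (hr : r ≠ 0) : (aeval (Ku)⁻¹ r).order ≤ 0 := by
  apply le_trans (order_le_of_coeff_ne_zero (g := -(r.natDegree : ℤ)) ?_) (by omega)
  rw [aeval_coeff, if_pos (by omega : -(r.natDegree:ℤ) ≤ 0),
    show ((-(-(r.natDegree:ℤ))).toNat) = r.natDegree by omega]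
  exact Polynomial.leadingCoeff_ne_zero.mpr hr

lemma le_aeval_order (r : Polynomial ℂ) : -(r.natDegree : ℤ) ≤ (aeval (Ku)⁻¹ r).order := by
  by_cases hr : aeval (Ku)⁻¹ r = 0
  · rw [hr, HahnSeries.order_zero]; omega
  by_contra hlt
  push_neg at hlt
  apply coeff_order_eq_zero.not.2 hr
  rw [aeval_coeff, if_pos (by omega : (aeval (Ku)⁻¹ r).order ≤ 0)]
  apply Polynomial.coeff_eq_zero_of_natDegree_lt
  omega

lemma oT_mul {x y : LaurentSeries ℂ} (hx : 1 ≤ x.orderTop) (hy : 1 ≤ y.orderTop) :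
    1 ≤ (x * y).orderTop := by
  refine le_trans ?_ orderTop_add_le_mul
  calc (1 : WithTop ℤ) ≤ 1 + 1 := by norm_num
    _ ≤ x.orderTop + y.orderTop := add_le_add hx hy

lemma oT_add {x y : LaurentSeries ℂ} (hx : 1 ≤ x.orderTop) (hy : 1 ≤ y.orderTop) :
    1 ≤ (x + y).orderTop := le_trans (le_min hx hy) min_orderTop_le_orderTop_add

/-- Liouville-type bound: let `α ∈ ℂ((1/t))` satisfy `α⁴ - α = 1/t` with
`α = -1/t + O(1/t²)`.  Then for all `p, q ∈ ℂ[t]` with `q ≠ 0` and `|α - p/q| < 1`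
(`1/t`-adically), one has `|α - p/q| ≥ e⁻¹/|q|⁴`, where `|q| = e^{deg q}`.
Here `ℂ((1/t))` is modelled as `LaurentSeries ℂ` in the variable `u = 1/t`, so `t = u⁻¹`,
and `|f| = e^{-v(f)}` with `v` the order. -/
theorem stmt8 (p q : Polynomial ℂ) (hq : q ≠ 0) (α : LaurentSeries ℂ)
    (hα : α ^ 4 - α = HahnSeries.single (1 : ℤ) (1 : ℂ))
    (hα0 : α.coeff 0 = 0) (hα1 : α.coeff 1 = -1)
    (happrox :
      Real.exp (-(((α -
          Polynomial.aeval ((HahnSeries.single (1 : ℤ) (1 : ℂ) : LaurentSeries ℂ))⁻¹ p /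
          Polynomial.aeval ((HahnSeries.single (1 : ℤ) (1 : ℂ) : LaurentSeries ℂ))⁻¹ q).order :
            ℤ) : ℝ)) < 1) :
    Real.exp (-1) / (Real.exp (q.natDegree : ℝ)) ^ 4 ≤
      Real.exp (-(((α -
          Polynomial.aeval ((HahnSeries.single (1 : ℤ) (1 : ℂ) : LaurentSeries ℂ))⁻¹ p /
          Polynomial.aeval ((HahnSeries.single (1 : ℤ) (1 : ℂ) : LaurentSeries ℂ))⁻¹ q).order :
            ℤ) : ℝ)) := by
  have hB : aeval (Ku)⁻¹ q ≠ 0 := aeval_ne_zero_of_ne hq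
  set A : LaurentSeries ℂ :=
    Polynomial.aeval ((HahnSeries.single (1 : ℤ) (1 : ℂ) : LaurentSeries ℂ))⁻¹ p with hA
  set B : LaurentSeries ℂ :=
    Polynomial.aeval ((HahnSeries.single (1 : ℤ) (1 : ℂ) : LaurentSeries ℂ))⁻¹ q with hBdef
  set β : LaurentSeries ℂ := A / B with hβ
  set d : ℤ := (α - β).order with hd
  -- d ≥ 1
  have hd1 : 0 < d := by
    have := Real.exp_lt_one_iff.mp happrox
    exact_mod_cast neg_neg_iff_pos.mp (by exact_mod_cast this)
  have hαβ : α - β ≠ 0 := by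
    intro h
    have h2 := hd1
    rw [hd, h, HahnSeries.order_zero] at h2
    exact lt_irrefl 0 h2
  have hαne : α ≠ 0 := by
    intro h
    rw [h] at hα1
    simp at hα1
  -- 1 ≤ α.order
  have hαord : (1 : ℤ) ≤ α.order := by
    by_contra hcon
    push_neg at hcon
    rcases lt_or_eq_of_le (by omega : α.order ≤ 0) with hlt | heq
    · have h4 : (α ^ 4).order = 4 * α.order := by
        rw [HahnSeries.order_pow, nsmul_eq_mul]; norm_num
      have hc4 : (α ^ 4).coeff (4 * α.order) ≠ 0 := by
        have := coeff_order_eq_zero.not.2 (pow_ne_zero 4 hαne)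
        rwa [h4] at this
      have hcα : α.coeff (4 * α.order) = 0 :=
        coeff_eq_zero_of_lt_order (by linarith)
      have hne : (α ^ 4 - α).coeff (4 * α.order) ≠ 0 := by
        rw [HahnSeries.coeff_sub, hcα, sub_zero]; exact hc4
      rw [hα] at hne
      exact hne (coeff_single_of_ne (by linarith : 4 * α.order ≠ 1))
    · have := coeff_order_eq_zero.not.2 hαne
      rw [heq] at this
      exact this hα0
  have hαT : (1 : WithTop ℤ) ≤ α.orderTop := by
    rw [← order_eq_orderTop_of_ne_zero hαne]
    exact_mod_cast hαord
  have hδT : (1 : WithTop ℤ) ≤ (α - β).orderTop := by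
    rw [← order_eq_orderTop_of_ne_zero hαβ]
    exact_mod_cast (by omega : (1:ℤ) ≤ (α - β).order)
  have hβT : (1 : WithTop ℤ) ≤ β.orderTop := by
    have hid : β = α - (α - β) := by ring
    rw [hid]
    exact le_trans (le_min hαT hδT) min_orderTop_le_orderTop_sub
  -- the cofactor f
  set f : LaurentSeries ℂ := β^3 + β^2*α + β*α^2 + α^3 - 1 with hfdef
  set S : LaurentSeries ℂ := β*β*β + β*β*α + β*α*α + α*α*α with hSdef
  have hfS : f = S - 1 := by rw [hfdef, hSdef]; ring
  have hST : (1 : WithTop ℤ) ≤ S.orderTop := by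
    rw [hSdef]
    exact oT_add (oT_add (oT_add (oT_mul (oT_mul hβT hβT) hβT)
      (oT_mul (oT_mul hβT hβT) hαT)) (oT_mul (oT_mul hβT hαT) hαT))
      (oT_mul (oT_mul hαT hαT) hαT)
  have hf0 : f.coeff 0 = -1 := by
    rw [hfS, HahnSeries.coeff_sub, coeff_eq_zero_of_lt_orderTop
      (lt_of_lt_of_le (by norm_num : (0 : WithTop ℤ) < 1) hST),
      ← single_zero_one, coeff_single_same]
    ring
  have hfne : f ≠ 0 := by
    intro h; rw [h] at hf0; simp at hf0
  have hford : f.order = 0 := by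
    have hle : f.order ≤ 0 := order_le_of_coeff_ne_zero (by rw [hf0]; norm_num)
    rcases hle.lt_or_eq with hcon | h
    · exfalso
      apply coeff_order_eq_zero.not.2 hfne
      have hSc : S.coeff f.order = 0 := coeff_eq_zero_of_lt_orderTop
        (lt_of_lt_of_le (by exact_mod_cast (by omega : f.order < (1:ℤ))) hST)
      have h1c : (1 : LaurentSeries ℂ).coeff f.order = 0 := by
        rw [← single_zero_one, coeff_single_of_ne (by omega : f.order ≠ (0:ℤ))]
      nth_rewrite 1 [hfS]
      rw [HahnSeries.coeff_sub, hSc, h1c, sub_zero]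
    · exact h
  -- key algebraic identity
  set m : Polynomial ℂ := X * (p^4 - p*q^3) - q^4 with hm
  have hβB : β * B = A := div_mul_cancel₀ A hB
  have hmval : aeval (Ku)⁻¹ m = (Ku)⁻¹ * (A^4 - A*B^3) - B^4 := by
    rw [hm, hA, hBdef]
    simp only [map_sub, map_mul, map_pow, Polynomial.aeval_X]
  have key : (β - α) * f * B^4 = A^4 - A*B^3 - Ku*B^4 := by
    rw [hfdef]
    calc (β - α) * (β^3 + β^2*α + β*α^2 + α^3 - 1) * B^4
        = (β*B)^4 - (β*B)*B^3 - (α^4 - α)*B^4 := by ring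
      _ = A^4 - A*B^3 - Ku*B^4 := by rw [hβB, hα]
  have key2 : (β - α) * f * B^4 = Ku * aeval (Ku)⁻¹ m := by
    rw [hmval, key]
    have huu : Ku * (Ku)⁻¹ = 1 := mul_inv_cancel₀ Ku_ne
    linear_combination (A * B^3 - A^4) * huu
  have hβαne : β - α ≠ 0 := fun h => hαβ (by rw [← neg_sub β α, h, neg_zero])
  have hPmne : aeval (Ku)⁻¹ m ≠ 0 := by
    intro h
    rw [h, mul_zero] at key2
    exact (mul_ne_zero (mul_ne_zero hβαne hfne) (pow_ne_zero 4 hB)) key2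
  have hmne : m ≠ 0 := by
    rintro h
    rw [h, map_zero] at hPmne
    exact hPmne rfl
  -- take orders
  have h1 : ((β - α) * f * B ^ 4).order = (β - α).order + f.order + (B^4).order := by
    rw [order_mul (mul_ne_zero hβαne hfne) (pow_ne_zero 4 hB), order_mul hβαne hfne]
  have h2 : (Ku * aeval (Ku)⁻¹ m).order = 1 + (aeval (Ku)⁻¹ m).order := by
    rw [order_mul Ku_ne hPmne, order_single one_ne_zero]
  have hBpow : (B^4).order = 4 * B.order := by
    rw [HahnSeries.order_pow, nsmul_eq_mul]; norm_num
  have hβαd : (β - α).order = d := by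
    rw [show β - α = -(α - β) by ring, HahnSeries.order_neg, hd]
  have heq : d + 4 * B.order = 1 + (aeval (Ku)⁻¹ m).order := by
    have := congrArg HahnSeries.order key2
    rw [h1, h2, hBpow, hβαd, hford, add_zero] at this
    exact this
  have hPmle : (aeval (Ku)⁻¹ m).order ≤ 0 := aeval_order_le hmne
  have hBge : -(q.natDegree : ℤ) ≤ B.order := le_aeval_order q
  have hdle : d ≤ 1 + 4 * (q.natDegree : ℤ) := by omega
  -- conclude
  have hrw : (Real.exp ((q.natDegree : ℝ)))^4 = Real.exp (4 * (q.natDegree : ℝ)) := by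
    rw [← Real.exp_nat_mul]; norm_num
  rw [hrw, ← Real.exp_sub]
  apply Real.exp_le_exp.mpr
  have : (d : ℝ) ≤ 1 + 4 * (q.natDegree : ℝ) := by exact_mod_cast hdle
  linarith
end

section
/- Let Λ ⊂ ℂ be a lattice with ℤ-basis ρ1, ρ2, and let η1, η2 be the corresponding quasi-periods of the Weierstrass ζ-function. Then the Legendre relation holds: ρ2·η1 - ρ1·η2 = ±2πi, with sign + if Im(ρ2/ρ1) > 0. -/
open Complex

section helpers

lemma legendre_seg_log (a b : ℂ) (him : (((b - a) / a)).im ≠ 0) :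
    ∫ t in (0:ℝ)..1, (a + (t:ℂ) * (b - a))⁻¹ * (b - a) = Complex.log (b / a) := by
  have ha : a ≠ 0 := by rintro rfl; simp at him
  set c : ℂ := (b - a) / a with hc
  have hcim : c.im ≠ 0 := him
  have hslit : ∀ t : ℝ, 0 ≤ t → (1 + (t:ℂ) * c) ∈ Complex.slitPlane := by
    intro t ht
    rcases eq_or_lt_of_le ht with h | h
    · rw [Complex.mem_slitPlane_iff]; left; simp [← h]
    · rw [Complex.mem_slitPlane_iff]; right
      simp only [Complex.add_im, Complex.one_im, Complex.mul_im, Complex.ofReal_re,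
        Complex.ofReal_im, Complex.one_re, zero_mul, add_zero, zero_add]
      intro hcon
      rcases mul_eq_zero.1 hcon with h' | h'
      · exact h.ne' h'
      · exact hcim h'
  have hne : ∀ t : ℝ, 0 ≤ t → (1 + (t:ℂ) * c) ≠ 0 :=
    fun t ht => Complex.slitPlane_ne_zero (hslit t ht)
  have hderiv : ∀ t : ℝ, t ∈ Set.uIcc (0:ℝ) 1 →
      HasDerivAt (fun s : ℝ => Complex.log (1 + (s:ℂ) * c)) ((1 + (t:ℂ) * c)⁻¹ * c) t := by
    intro t ht
    have ht0 : (0:ℝ) ≤ t := by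
      rw [Set.uIcc_of_le (by norm_num : (0:ℝ) ≤ 1)] at ht; exact ht.1
    have hinner : HasDerivAt (fun w : ℂ => 1 + w * c) c (t:ℂ) := by
      simpa using ((hasDerivAt_id ((t:ℝ):ℂ)).mul_const c).const_add 1
    have h1 := (Complex.hasDerivAt_log (hslit t ht0)).comp ((t:ℝ):ℂ) hinner
    exact (h1 : HasDerivAt (fun w : ℂ => Complex.log (1 + w * c)) _ _).comp_ofReal
  have hcont : ContinuousOn (fun t : ℝ => (1 + (t:ℂ) * c)⁻¹ * c) (Set.uIcc 0 1) := by
    apply ContinuousOn.mul _ continuousOn_const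
    apply ContinuousOn.inv₀
    · fun_prop
    · intro t ht
      have ht0 : (0:ℝ) ≤ t := by
        rw [Set.uIcc_of_le (by norm_num : (0:ℝ) ≤ 1)] at ht; exact ht.1
      exact hne t ht0
  have hint := intervalIntegral.integral_eq_sub_of_hasDerivAt hderiv
    (hcont.intervalIntegrable)
  have heq : ∀ t : ℝ, (a + (t:ℂ) * (b - a))⁻¹ * (b - a) = (1 + (t:ℂ) * c)⁻¹ * c := by
    intro t
    have h2 : a + (t:ℂ) * (b - a) = a * (1 + (t:ℂ) * c) := by
      rw [hc, show a * (1 + (t:ℂ) * ((b - a) / a)) = a + (t:ℂ) * (a * ((b - a) / a)) by ring,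
        mul_div_cancel₀ _ ha]
    rw [h2, mul_inv, hc, div_eq_mul_inv]; ring
  rw [intervalIntegral.integral_congr (fun t _ => heq t), hint]
  have hb : 1 + ((1:ℝ):ℂ) * c = b / a := by
    rw [hc]; field_simp; push_cast; ring
  rw [hb]
  simp


lemma legendre_green (F : ℂ → ℂ) (U : Set ℂ) (hU : IsOpen U)
    (hF : DifferentiableOn ℂ F U) (z0 ρ1 ρ2 : ℂ)
    (hmem : ∀ s t : ℝ, s ∈ Set.Icc (0:ℝ) 1 → t ∈ Set.Icc (0:ℝ) 1 →
      z0 + (s:ℂ) * ρ1 + (t:ℂ) * ρ2 ∈ U) :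
    ((∫ s in (0:ℝ)..1, F (z0 + (s:ℂ) * ρ1 + ((0:ℝ):ℂ) * ρ2) * ρ1) +
     (∫ t in (0:ℝ)..1, F (z0 + ((1:ℝ):ℂ) * ρ1 + (t:ℂ) * ρ2) * ρ2)) -
    ((∫ s in (0:ℝ)..1, F (z0 + (s:ℂ) * ρ1 + ((1:ℝ):ℂ) * ρ2) * ρ1) +
     (∫ t in (0:ℝ)..1, F (z0 + ((0:ℝ):ℂ) * ρ1 + (t:ℂ) * ρ2) * ρ2)) = 0 := by
  have han : AnalyticOnNhd ℂ F U := hF.analyticOnNhd hU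
  have hd : ∀ z ∈ U, HasDerivAt F (deriv F z) z := fun z hz =>
    ((hF z hz).differentiableAt (hU.mem_nhds hz)).hasDerivAt
  have hd' : ContinuousOn (deriv F) U := (han.deriv.continuousOn)
  set G : ℝ → ℝ → ℂ := fun s t => z0 + (s:ℂ) * ρ1 + (t:ℂ) * ρ2 with hG
  have hGcont : Continuous (fun p : ℝ × ℝ => G p.1 p.2) := by fun_prop
  have hFc : ContinuousOn F U := hF.continuousOn
  -- derivative of F ∘ G in s
  have hds : ∀ s t : ℝ, s ∈ Set.Icc (0:ℝ) 1 → t ∈ Set.Icc (0:ℝ) 1 →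
      HasDerivAt (fun x : ℝ => F (G x t)) (deriv F (G s t) * ρ1) s := by
    intro s t hs ht
    have hinner : HasDerivAt (fun w : ℂ => F (z0 + w * ρ1 + (t:ℂ) * ρ2))
        (deriv F (G s t) * ρ1) ((s:ℝ):ℂ) := by
      have h0 : HasDerivAt (fun w : ℂ => z0 + w * ρ1 + (t:ℂ) * ρ2) ρ1 ((s:ℝ):ℂ) := by
        simpa using (((hasDerivAt_id ((s:ℝ):ℂ)).mul_const ρ1).const_add z0).add_const ((t:ℂ) * ρ2)
      have := HasDerivAt.comp ((s:ℝ):ℂ) (hd (G s t) (hmem s t hs ht)) h0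
      exact this
    exact hinner.comp_ofReal
  have hdt : ∀ s t : ℝ, s ∈ Set.Icc (0:ℝ) 1 → t ∈ Set.Icc (0:ℝ) 1 →
      HasDerivAt (fun x : ℝ => F (G s x)) (deriv F (G s t) * ρ2) t := by
    intro s t hs ht
    have hinner : HasDerivAt (fun w : ℂ => F (z0 + (s:ℂ) * ρ1 + w * ρ2))
        (deriv F (G s t) * ρ2) ((t:ℝ):ℂ) := by
      have h0 : HasDerivAt (fun w : ℂ => z0 + (s:ℂ) * ρ1 + w * ρ2) ρ2 ((t:ℝ):ℂ) := by
        simpa using ((hasDerivAt_id ((t:ℝ):ℂ)).mul_const ρ2).const_add (z0 + (s:ℂ) * ρ1)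
      have := HasDerivAt.comp ((t:ℝ):ℂ) (hd (G s t) (hmem s t hs ht)) h0
      exact this
    exact hinner.comp_ofReal
  -- continuity of (s,t) ↦ deriv F (G s t) on the square
  have hIcc : Set.uIcc (0:ℝ) 1 = Set.Icc 0 1 := Set.uIcc_of_le (by norm_num)
  have hsq : ∀ p : ℝ × ℝ, p ∈ (Set.Icc (0:ℝ) 1 ×ˢ Set.Icc (0:ℝ) 1) → G p.1 p.2 ∈ U :=
    fun p hp => hmem p.1 p.2 hp.1 hp.2
  have hDcont : ContinuousOn (fun p : ℝ × ℝ => deriv F (G p.1 p.2))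
      (Set.Icc (0:ℝ) 1 ×ˢ Set.Icc (0:ℝ) 1) :=
    hd'.comp hGcont.continuousOn hsq
  -- step 1 : FTC in s
  have h1 : ∀ t ∈ Set.Icc (0:ℝ) 1,
      (∫ s in (0:ℝ)..1, deriv F (G s t) * ρ1) = F (G 1 t) - F (G 0 t) := by
    intro t ht
    refine intervalIntegral.integral_eq_sub_of_hasDerivAt
      (f := fun x => F (G x t)) (f' := fun x => deriv F (G x t) * ρ1) ?_ ?_
    · intro s hs; exact hds s t (hIcc ▸ hs) ht
    · apply ContinuousOn.intervalIntegrable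
      rw [hIcc]
      exact (hDcont.comp (Continuous.continuousOn (by fun_prop))
        (fun s hs => Set.mk_mem_prod hs ht)).mul continuousOn_const
  have h2 : ∀ s ∈ Set.Icc (0:ℝ) 1,
      (∫ t in (0:ℝ)..1, deriv F (G s t) * ρ2) = F (G s 1) - F (G s 0) := by
    intro s hs
    refine intervalIntegral.integral_eq_sub_of_hasDerivAt
      (f := fun x => F (G s x)) (f' := fun x => deriv F (G s x) * ρ2) ?_ ?_
    · intro t ht; exact hdt s t hs (hIcc ▸ ht)
    · apply ContinuousOn.intervalIntegrable
      rw [hIcc]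
      exact (hDcont.comp (Continuous.continuousOn (by fun_prop))
        (fun t ht => Set.mk_mem_prod hs ht)).mul continuousOn_const
  -- integrability of the sides
  have hside_t : ∀ c : ℝ, c ∈ Set.Icc (0:ℝ) 1 →
      IntervalIntegrable (fun t => F (G c t) * ρ2) MeasureTheory.volume 0 1 := by
    intro c hc
    apply ContinuousOn.intervalIntegrable
    rw [hIcc]
    exact ((hFc.comp (Continuous.continuousOn (by fun_prop : Continuous (fun t : ℝ => G c t)))
      (fun t ht => hmem c t hc ht)).mul continuousOn_const)
  have hside_s : ∀ c : ℝ, c ∈ Set.Icc (0:ℝ) 1 →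
      IntervalIntegrable (fun s => F (G s c) * ρ1) MeasureTheory.volume 0 1 := by
    intro c hc
    apply ContinuousOn.intervalIntegrable
    rw [hIcc]
    exact ((hFc.comp (Continuous.continuousOn (by fun_prop : Continuous (fun s : ℝ => G s c)))
      (fun s hs => hmem s c hs hc)).mul continuousOn_const)
  -- the double integrand
  set K : ℝ → ℝ → ℂ := fun s t => deriv F (G s t) * ρ1 * ρ2 with hK
  have hKcont : ContinuousOn (Function.uncurry K) (Set.Icc (0:ℝ) 1 ×ˢ Set.Icc (0:ℝ) 1) :=
    (hDcont.mul continuousOn_const).mul continuousOn_const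
  have hKint : MeasureTheory.IntegrableOn (Function.uncurry K)
      (Set.Icc (0:ℝ) 1 ×ˢ Set.Icc (0:ℝ) 1) MeasureTheory.volume :=
    hKcont.integrableOn_compact (isCompact_Icc.prod isCompact_Icc)
  -- Fubini
  have hswap : (∫ s in Set.Ioc (0:ℝ) 1, ∫ t in Set.Ioc (0:ℝ) 1, K s t)
      = ∫ t in Set.Ioc (0:ℝ) 1, ∫ s in Set.Ioc (0:ℝ) 1, K s t := by
    have : MeasureTheory.Integrable (Function.uncurry K)
        ((MeasureTheory.volume.restrict (Set.Ioc (0:ℝ) 1)).prod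
          (MeasureTheory.volume.restrict (Set.Ioc (0:ℝ) 1))) := by
      rw [MeasureTheory.Measure.prod_restrict]
      exact hKint.mono_set (Set.prod_mono Set.Ioc_subset_Icc_self Set.Ioc_subset_Icc_self)
    exact MeasureTheory.integral_integral_swap this
  have hswap' : (∫ s in (0:ℝ)..1, ∫ t in (0:ℝ)..1, K s t)
      = ∫ t in (0:ℝ)..1, ∫ s in (0:ℝ)..1, K s t := by
    simp only [intervalIntegral.integral_of_le (by norm_num : (0:ℝ) ≤ 1)]
    exact hswap
  -- left-hand side in terms of the double integral
  have hL : (∫ t in (0:ℝ)..1, F (G 1 t) * ρ2) - (∫ t in (0:ℝ)..1, F (G 0 t) * ρ2)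
      = ∫ t in (0:ℝ)..1, ∫ s in (0:ℝ)..1, K s t := by
    rw [← intervalIntegral.integral_sub (hside_t 1 (by norm_num)) (hside_t 0 (by norm_num))]
    apply intervalIntegral.integral_congr
    intro t ht
    rw [hIcc] at ht
    have := h1 t ht
    calc F (G 1 t) * ρ2 - F (G 0 t) * ρ2 = (F (G 1 t) - F (G 0 t)) * ρ2 := by ring
    _ = (∫ s in (0:ℝ)..1, deriv F (G s t) * ρ1) * ρ2 := by rw [this]
    _ = ∫ s in (0:ℝ)..1, K s t := by
        exact (intervalIntegral.integral_mul_const ρ2 _).symm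
  have hR : (∫ s in (0:ℝ)..1, F (G s 1) * ρ1) - (∫ s in (0:ℝ)..1, F (G s 0) * ρ1)
      = ∫ s in (0:ℝ)..1, ∫ t in (0:ℝ)..1, K s t := by
    rw [← intervalIntegral.integral_sub (hside_s 1 (by norm_num)) (hside_s 0 (by norm_num))]
    apply intervalIntegral.integral_congr
    intro s hs
    rw [hIcc] at hs
    have := h2 s hs
    calc F (G s 1) * ρ1 - F (G s 0) * ρ1 = (F (G s 1) - F (G s 0)) * ρ1 := by ring
    _ = (∫ t in (0:ℝ)..1, deriv F (G s t) * ρ2) * ρ1 := by rw [this]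
    _ = ∫ t in (0:ℝ)..1, (deriv F (G s t) * ρ2) * ρ1 := by
        exact (intervalIntegral.integral_mul_const ρ1 _).symm
    _ = ∫ t in (0:ℝ)..1, K s t := by
        apply intervalIntegral.integral_congr
        intro t ht
        simp only [hK]
        ring
  -- put everything together
  have hgoal : ((∫ s in (0:ℝ)..1, F (G s 0) * ρ1) + (∫ t in (0:ℝ)..1, F (G 1 t) * ρ2)) -
      ((∫ s in (0:ℝ)..1, F (G s 1) * ρ1) + (∫ t in (0:ℝ)..1, F (G 0 t) * ρ2)) = 0 := by
    have := hswap'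
    rw [← hL, ← hR] at this
    linear_combination -this
  exact hgoal


lemma legendre_log4_pos (w : ℂ) (hw : 0 < w.im) :
    Complex.log w + Complex.log (-(w⁻¹)) - Complex.log (w⁻¹) - Complex.log (-w)
      = 2 * Real.pi * Complex.I := by
  have hw0 : w ≠ 0 := by intro h; rw [h] at hw; simp at hw
  have hargpi : w.arg ≠ Real.pi := by
    intro hpi; rw [Complex.arg_eq_pi_iff] at hpi; obtain ⟨-, h⟩ := hpi; rw [h] at hw; exact lt_irrefl 0 hw
  have h1 : (w⁻¹).arg = -w.arg := by rw [Complex.arg_inv, if_neg hargpi]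
  have h2 : (w⁻¹).im < 0 := by
    rw [Complex.inv_im]
    exact div_neg_of_neg_of_pos (by linarith) (Complex.normSq_pos.2 hw0)
  have h3 : (-(w⁻¹)).arg = (w⁻¹).arg + Real.pi := Complex.arg_neg_eq_arg_add_pi_of_im_neg h2
  have h4 : (-w).arg = w.arg - Real.pi := Complex.arg_neg_eq_arg_sub_pi_of_im_pos hw
  apply Complex.ext
  · simp [Complex.log_re, map_inv₀, Complex.mul_re, Complex.mul_im]
  · simp only [Complex.sub_im, Complex.add_im, Complex.log_im, h1, h3, h4,
      Complex.mul_im, Complex.mul_re, Complex.I_im, Complex.I_re, Complex.ofReal_im,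
      Complex.ofReal_re, Complex.re_ofNat, Complex.im_ofNat]
    ring

lemma legendre_log4_neg (w : ℂ) (hw : w.im < 0) :
    Complex.log w + Complex.log (-(w⁻¹)) - Complex.log (w⁻¹) - Complex.log (-w)
      = -(2 * Real.pi * Complex.I) := by
  have hw0 : w ≠ 0 := by intro h; rw [h] at hw; simp at hw
  have hargpi : w.arg ≠ Real.pi := by
    intro hpi; rw [Complex.arg_eq_pi_iff] at hpi; obtain ⟨-, h⟩ := hpi; rw [h] at hw; exact lt_irrefl 0 hw
  have h1 : (w⁻¹).arg = -w.arg := by rw [Complex.arg_inv, if_neg hargpi]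
  have h2 : 0 < (w⁻¹).im := by
    rw [Complex.inv_im]
    exact div_pos (by linarith) (Complex.normSq_pos.2 hw0)
  have h3 : (-(w⁻¹)).arg = (w⁻¹).arg - Real.pi := Complex.arg_neg_eq_arg_sub_pi_of_im_pos h2
  have h4 : (-w).arg = w.arg + Real.pi := Complex.arg_neg_eq_arg_add_pi_of_im_neg hw
  apply Complex.ext
  · simp [Complex.log_re, map_inv₀, Complex.mul_re, Complex.mul_im]
  · simp only [Complex.sub_im, Complex.add_im, Complex.log_im, h1, h3, h4,
      Complex.mul_im, Complex.mul_re, Complex.I_im, Complex.I_re, Complex.ofReal_im,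
      Complex.ofReal_re, Complex.re_ofNat, Complex.im_ofNat, Complex.neg_im]
    ring



lemma legendre_him_aux (u v : ℂ) (hn : u.im * v.re - u.re * v.im ≠ 0) : ((u / v)).im ≠ 0 := by
  have hv : v ≠ 0 := by rintro rfl; simp at hn
  rw [Complex.div_im, div_sub_div_same]
  exact div_ne_zero hn (Complex.normSq_pos.2 hv).ne'

end helpers

set_option maxHeartbeats 1000000 in
/-- The Legendre relation: let `Λ = ℤρ₁ + ℤρ₂` be a lattice in `ℂ` (with `ρ₁, ρ₂`
`ℝ`-linearly independent), and let `ζf` be the Weierstrass zeta function of `Λ`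
(holomorphic off `Λ`, with a simple pole of residue `1` at each lattice point) with
quasi-periods `η₁, η₂`, i.e. `ζf(z + ρᵢ) = ζf(z) + ηᵢ`.  Then
`ρ₂η₁ - ρ₁η₂ = ±2πi`, with sign `+` if `Im(ρ₂/ρ₁) > 0`. -/
theorem stmt10 (ρ1 ρ2 η1 η2 : ℂ) (hindep : LinearIndependent ℝ ![ρ1, ρ2])
    (Λ : Set ℂ) (hΛ : Λ = {z | ∃ m n : ℤ, z = m • ρ1 + n • ρ2})
    (ζf : ℂ → ℂ)
    (hdiff : DifferentiableOn ℂ ζf Λᶜ)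
    (hpole : ∀ w ∈ Λ, ∃ g : ℂ → ℂ, AnalyticAt ℂ g w ∧
      (fun z => ζf z - (z - w)⁻¹) =ᶠ[nhdsWithin w {w}ᶜ] g)
    (hq1 : ∀ z ∉ Λ, ζf (z + ρ1) = ζf z + η1)
    (hq2 : ∀ z ∉ Λ, ζf (z + ρ2) = ζf z + η2) :
    (ρ2 * η1 - ρ1 * η2 = 2 * Real.pi * I ∨ ρ2 * η1 - ρ1 * η2 = -(2 * Real.pi * I)) ∧
    (0 < (ρ2 / ρ1).im → ρ2 * η1 - ρ1 * η2 = 2 * Real.pi * I) := by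
  classical
  -- real-linear coordinates
  have hcoord : ∀ x y : ℝ, (x:ℂ) * ρ1 + (y:ℂ) * ρ2 = 0 → x = 0 ∧ y = 0 := by
    intro x y hxy
    have h := Fintype.linearIndependent_iff.1 hindep ![x, y] (by
      rw [Fin.sum_univ_two]
      simpa [Complex.real_smul] using hxy)
    exact ⟨h 0, h 1⟩
  set D : ℝ := ρ2.im * ρ1.re - ρ2.re * ρ1.im with hDdef
  have hρ1 : ρ1 ≠ 0 := by
    intro h
    have := hcoord 1 0 (by simp [h])
    exact one_ne_zero this.1
  have hD : D ≠ 0 := by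
    intro h0
    have hrim : (ρ2 / ρ1).im = 0 := by
      rw [Complex.div_im, div_sub_div_same, ← hDdef, h0, zero_div]
    have hre : ((((ρ2 / ρ1).re : ℝ)) : ℂ) = ρ2 / ρ1 := by
      apply Complex.ext <;> simp [hrim]
    have hρ2 : ρ2 = (((ρ2 / ρ1).re : ℝ) : ℂ) * ρ1 := by
      rw [hre]; field_simp
    have := hcoord (-(ρ2/ρ1).re) 1 (by push_cast; linear_combination hρ2)
    exact one_ne_zero this.2
  clear_value D
  -- the basis
  have hcard : Fintype.card (Fin 2) = Module.finrank ℝ ℂ := by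
    simp [Complex.finrank_real_complex]
  set b : Module.Basis (Fin 2) ℝ ℂ := basisOfLinearIndependentOfCardEqFinrank hindep hcard with hbdef
  have hb : ⇑b = ![ρ1, ρ2] := coe_basisOfLinearIndependentOfCardEqFinrank hindep hcard
  have hb0 : b 0 = ρ1 := by rw [hb]; rfl
  have hb1 : b 1 = ρ2 := by rw [hb]; rfl
  clear_value b
  have hrepr0 : ∀ x y : ℝ, b.repr ((x:ℂ) * ρ1 + (y:ℂ) * ρ2) 0 = x := by
    intro x y
    have e : (x:ℂ) * ρ1 + (y:ℂ) * ρ2 = x • b 0 + y • b 1 := by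
      rw [hb0, hb1, Complex.real_smul, Complex.real_smul]
    rw [e]
    simp only [map_add, map_smul, Finsupp.coe_add, Finsupp.coe_smul, Pi.add_apply,
      Pi.smul_apply, Module.Basis.repr_self, Finsupp.single_apply, smul_eq_mul]
    norm_num
  have hrepr1 : ∀ x y : ℝ, b.repr ((x:ℂ) * ρ1 + (y:ℂ) * ρ2) 1 = y := by
    intro x y
    have e : (x:ℂ) * ρ1 + (y:ℂ) * ρ2 = x • b 0 + y • b 1 := by
      rw [hb0, hb1, Complex.real_smul, Complex.real_smul]
    rw [e]
    simp only [map_add, map_smul, Finsupp.coe_add, Finsupp.coe_smul, Pi.add_apply,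
      Pi.smul_apply, Module.Basis.repr_self, Finsupp.single_apply, smul_eq_mul]
    norm_num
  have hexp : ∀ z : ℂ, z = ((b.repr z 0 : ℝ):ℂ) * ρ1 + ((b.repr z 1 : ℝ):ℂ) * ρ2 := by
    intro z
    have h := b.sum_repr z
    rw [Fin.sum_univ_two, hb0, hb1, Complex.real_smul, Complex.real_smul] at h
    exact h.symm
  have hΛiff : ∀ z : ℂ, z ∈ Λ ↔ ∃ m n : ℤ, b.repr z 0 = m ∧ b.repr z 1 = n := by
    intro z
    rw [hΛ]; simp only [Set.mem_setOf_eq]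
    constructor
    · rintro ⟨m, n, rfl⟩
      have e : (m:ℤ) • ρ1 + (n:ℤ) • ρ2 = ((m:ℝ):ℂ) * ρ1 + ((n:ℝ):ℂ) * ρ2 := by
        push_cast [zsmul_eq_mul]; ring
      exact ⟨m, n, by rw [e, hrepr0], by rw [e, hrepr1]⟩
    · rintro ⟨m, n, h0, h1⟩
      refine ⟨m, n, ?_⟩
      rw [hexp z, h0, h1]
      push_cast [zsmul_eq_mul]; ring
  have hcont0 : Continuous fun z : ℂ => b.repr z 0 := by
    have := LinearMap.continuous_of_finiteDimensional (b.coord 0)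
    convert this using 1; funext z; exact (b.coord_apply 0 z).symm
  have hcont1 : Continuous fun z : ℂ => b.repr z 1 := by
    have := LinearMap.continuous_of_finiteDimensional (b.coord 1)
    convert this using 1; funext z; exact (b.coord_apply 1 z).symm
  have hΛclosed : IsClosed Λ := by
    have hset : Λ = (fun z : ℂ => b.repr z 0) ⁻¹' (Set.range ((↑) : ℤ → ℝ)) ∩
        (fun z : ℂ => b.repr z 1) ⁻¹' (Set.range ((↑) : ℤ → ℝ)) := by
      ext z
      rw [hΛiff z]
      simp only [Set.mem_inter_iff, Set.mem_preimage, Set.mem_range]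
      constructor
      · rintro ⟨m, n, h0, h1⟩; exact ⟨⟨m, h0.symm⟩, ⟨n, h1.symm⟩⟩
      · rintro ⟨⟨m, h0⟩, ⟨n, h1⟩⟩; exact ⟨m, n, h0.symm, h1.symm⟩
    rw [hset]
    exact ((Int.isClosedEmbedding_coe_real.isClosed_range).preimage hcont0).inter
      ((Int.isClosedEmbedding_coe_real.isClosed_range).preimage hcont1)
  -- the open neighbourhood U of the fundamental parallelogram
  set U : Set ℂ := {z | |b.repr z 0| < 3/4 ∧ |b.repr z 1| < 3/4} with hUdef
  have hUopen : IsOpen U := by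
    have : U = (fun z : ℂ => b.repr z 0) ⁻¹' (Set.Ioo (-(3/4)) (3/4)) ∩
        (fun z : ℂ => b.repr z 1) ⁻¹' (Set.Ioo (-(3/4)) (3/4)) := by
      ext z; simp [hUdef, Set.mem_Ioo, abs_lt]
    rw [this]
    exact (isOpen_Ioo.preimage hcont0).inter (isOpen_Ioo.preimage hcont1)
  clear_value U
  have hUzero : ∀ z ∈ U, z ∈ Λ → z = 0 := by
    intro z hz hzΛ
    rw [hUdef] at hz
    obtain ⟨m, n, h0, h1⟩ := (hΛiff z).1 hzΛ
    obtain ⟨hz0, hz1⟩ := hz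
    have hm : m = 0 := by
      rw [h0] at hz0
      by_contra hm
      have h1' : (1:ℝ) ≤ |(m:ℝ)| := by
        rw [← Int.cast_abs]; exact_mod_cast Int.one_le_abs hm
      linarith
    have hn : n = 0 := by
      rw [h1] at hz1
      by_contra hn
      have h1' : (1:ℝ) ≤ |(n:ℝ)| := by
        rw [← Int.cast_abs]; exact_mod_cast Int.one_le_abs hn
      linarith
    rw [hexp z, h0, h1, hm, hn]; simp
  have h0Λ : (0:ℂ) ∈ Λ := by
    rw [hΛ]; exact ⟨0, 0, by simp⟩
  have hnotΛ : ∀ x y : ℝ, (|2*x| = 1 ∨ |2*y| = 1) → ((x:ℂ) * ρ1 + (y:ℂ) * ρ2) ∉ Λ := by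
    intro x y hxy h
    obtain ⟨m, n, h0, h1⟩ := (hΛiff _).1 h
    rw [hrepr0] at h0; rw [hrepr1] at h1
    rcases hxy with hx | hy
    · rw [h0] at hx
      have : |(2 * m : ℤ)| = ((1:ℤ)) := by
        have : ((|2 * m| : ℤ) : ℝ) = ((1:ℤ):ℝ) := by push_cast [Int.cast_abs] at hx ⊢; exact hx
        exact_mod_cast this
      rw [abs_eq (by norm_num : (0:ℤ) ≤ 1)] at this
      omega
    · rw [h1] at hy
      have : |(2 * n : ℤ)| = ((1:ℤ)) := by
        have : ((|2 * n| : ℤ) : ℝ) = ((1:ℤ):ℝ) := by push_cast [Int.cast_abs] at hy ⊢; exact hy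
        exact_mod_cast this
      rw [abs_eq (by norm_num : (0:ℤ) ≤ 1)] at this
      omega
  -- the pole at 0 and the regularised function F
  obtain ⟨g, hg, hgev⟩ := hpole 0 h0Λ
  set F : ℂ → ℂ := fun z => if z = 0 then g 0 else ζf z - z⁻¹ with hFdef
  clear_value F
  have hF0 : F =ᶠ[nhds 0] g := by
    have h2 : ∀ᶠ z in nhds (0:ℂ), z ∈ ({0}ᶜ : Set ℂ) → ζf z - (z - 0)⁻¹ = g z := by
      rw [← eventually_nhdsWithin_iff]
      exact hgev
    filter_upwards [h2] with z hz
    by_cases hz0 : z = 0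
    · subst hz0; simp [hFdef]
    · rw [hFdef]
      simp only [if_neg hz0]
      have := hz (by simpa [Set.mem_compl_singleton_iff] using hz0)
      rw [sub_zero] at this
      exact this
  have hFdiff : DifferentiableOn ℂ F U := by
    intro z hz
    rcases eq_or_ne z 0 with rfl | hz0
    · exact (hg.differentiableAt.congr_of_eventuallyEq hF0).differentiableWithinAt
    · have hzΛ : z ∉ Λ := fun h => hz0 (hUzero z hz h)
      have h1 : DifferentiableAt ℂ ζf z :=
        hdiff.differentiableAt (hΛclosed.isOpen_compl.mem_nhds hzΛ)
      have h2 : DifferentiableAt ℂ (fun w : ℂ => ζf w - w⁻¹) z :=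
        h1.sub (differentiableAt_inv hz0)
      have h3 : F =ᶠ[nhds z] fun w : ℂ => ζf w - w⁻¹ := by
        filter_upwards [isOpen_compl_singleton.mem_nhds
          (Set.mem_compl_singleton_iff.2 hz0)] with w hw
        rw [hFdef]
        simp only [if_neg (Set.mem_compl_singleton_iff.1 hw)]
      exact (h2.congr_of_eventuallyEq h3).differentiableWithinAt
  have hFcont : ContinuousOn F U := hFdiff.continuousOn
  -- the vertices of the fundamental parallelogram
  set v1 : ℂ := ((-(1/2) : ℝ):ℂ) * ρ1 + ((-(1/2) : ℝ):ℂ) * ρ2 with hv1def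
  set v2 : ℂ := (((1/2) : ℝ):ℂ) * ρ1 + ((-(1/2) : ℝ):ℂ) * ρ2 with hv2def
  set v3 : ℂ := (((1/2) : ℝ):ℂ) * ρ1 + (((1/2) : ℝ):ℂ) * ρ2 with hv3def
  set v4 : ℂ := ((-(1/2) : ℝ):ℂ) * ρ1 + (((1/2) : ℝ):ℂ) * ρ2 with hv4def
  clear_value v1 v2 v3 v4
  have hmemU : ∀ x y : ℝ, |x| < 3/4 → |y| < 3/4 → ((x:ℂ) * ρ1 + (y:ℂ) * ρ2) ∈ U := by
    intro x y hx hy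
    rw [hUdef]
    exact ⟨by rwa [hrepr0], by rwa [hrepr1]⟩
  have hco : ∀ s t : ℝ, v1 + (s:ℂ) * ρ1 + (t:ℂ) * ρ2
      = ((s - 1/2 : ℝ):ℂ) * ρ1 + ((t - 1/2 : ℝ):ℂ) * ρ2 := by
    intro s t
    rw [hv1def]
    push_cast
    ring
  have hsquare : ∀ s t : ℝ, s ∈ Set.Icc (0:ℝ) 1 → t ∈ Set.Icc (0:ℝ) 1 →
      v1 + (s:ℂ) * ρ1 + (t:ℂ) * ρ2 ∈ U := by
    intro s t hs ht
    rw [hco s t]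
    apply hmemU
    · rw [abs_lt]; constructor <;> [linarith [hs.1]; linarith [hs.2]]
    · rw [abs_lt]; constructor <;> [linarith [ht.1]; linarith [ht.2]]
  -- the four sides avoid the lattice (hence avoid 0)
  have hbot : ∀ s : ℝ, v1 + (s:ℂ) * ρ1 + ((0:ℝ):ℂ) * ρ2 ∉ Λ := by
    intro s
    rw [hco s 0]
    exact hnotΛ _ _ (Or.inr (by norm_num))
  have hleft : ∀ t : ℝ, v1 + ((0:ℝ):ℂ) * ρ1 + (t:ℂ) * ρ2 ∉ Λ := by
    intro t
    rw [hco 0 t]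
    exact hnotΛ _ _ (Or.inl (by norm_num))
  have hnotΛ_ne : ∀ z : ℂ, z ∉ Λ → z ≠ 0 := by
    intro z hz h0
    rw [h0] at hz
    exact hz h0Λ
  have htop : ∀ s : ℝ, v1 + (s:ℂ) * ρ1 + ((1:ℝ):ℂ) * ρ2 ∉ Λ := by
    intro s
    rw [hco s 1]
    exact hnotΛ _ _ (Or.inr (by norm_num))
  have hright : ∀ t : ℝ, v1 + ((1:ℝ):ℂ) * ρ1 + (t:ℂ) * ρ2 ∉ Λ := by
    intro t
    rw [hco 1 t]
    exact hnotΛ _ _ (Or.inl (by norm_num))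
  -- pointwise decomposition   ζf = F + inv   off the lattice
  have hdecomp : ∀ z : ℂ, z ∉ Λ → ζf z = F z + z⁻¹ := by
    intro z hz
    rw [hFdef]
    simp only [if_neg (hnotΛ_ne z hz)]
    ring
  -- integrability of the side integrands
  have hIcc : Set.uIcc (0:ℝ) 1 = Set.Icc 0 1 := Set.uIcc_of_le (by norm_num)
  have hFint_s : ∀ c : ℝ, c ∈ Set.Icc (0:ℝ) 1 → IntervalIntegrable
      (fun s : ℝ => F (v1 + (s:ℂ) * ρ1 + ((c:ℝ):ℂ) * ρ2) * ρ1) MeasureTheory.volume 0 1 := by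
    intro c hc
    apply ContinuousOn.intervalIntegrable
    rw [hIcc]
    exact ((hFcont.comp (Continuous.continuousOn (by fun_prop))
      (fun s hs => hsquare s c hs hc)).mul continuousOn_const)
  have hFint_t : ∀ c : ℝ, c ∈ Set.Icc (0:ℝ) 1 → IntervalIntegrable
      (fun t : ℝ => F (v1 + ((c:ℝ):ℂ) * ρ1 + (t:ℂ) * ρ2) * ρ2) MeasureTheory.volume 0 1 := by
    intro c hc
    apply ContinuousOn.intervalIntegrable
    rw [hIcc]
    exact ((hFcont.comp (Continuous.continuousOn (by fun_prop))
      (fun t ht => hsquare c t hc ht)).mul continuousOn_const)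
  have hIint_s : ∀ c : ℝ, (∀ s : ℝ, v1 + (s:ℂ) * ρ1 + ((c:ℝ):ℂ) * ρ2 ∉ Λ) → IntervalIntegrable
      (fun s : ℝ => (v1 + (s:ℂ) * ρ1 + ((c:ℝ):ℂ) * ρ2)⁻¹ * ρ1) MeasureTheory.volume 0 1 := by
    intro c hcΛ
    apply ContinuousOn.intervalIntegrable
    apply ContinuousOn.mul _ continuousOn_const
    exact ContinuousOn.inv₀ (Continuous.continuousOn (by fun_prop))
      (fun s _ => hnotΛ_ne _ (hcΛ s))
  have hIint_t : ∀ c : ℝ, (∀ t : ℝ, v1 + ((c:ℝ):ℂ) * ρ1 + (t:ℂ) * ρ2 ∉ Λ) → IntervalIntegrable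
      (fun t : ℝ => (v1 + ((c:ℝ):ℂ) * ρ1 + (t:ℂ) * ρ2)⁻¹ * ρ2) MeasureTheory.volume 0 1 := by
    intro c hcΛ
    apply ContinuousOn.intervalIntegrable
    apply ContinuousOn.mul _ continuousOn_const
    exact ContinuousOn.inv₀ (Continuous.continuousOn (by fun_prop))
      (fun t _ => hnotΛ_ne _ (hcΛ t))
  -- quasiperiodicity : top side vs bottom side
  have e_top : ((∫ s in (0:ℝ)..1, F (v1 + (s:ℂ) * ρ1 + ((1:ℝ):ℂ) * ρ2) * ρ1) +
      (∫ s in (0:ℝ)..1, (v1 + (s:ℂ) * ρ1 + ((1:ℝ):ℂ) * ρ2)⁻¹ * ρ1)) =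
      ((∫ s in (0:ℝ)..1, F (v1 + (s:ℂ) * ρ1 + ((0:ℝ):ℂ) * ρ2) * ρ1) +
      (∫ s in (0:ℝ)..1, (v1 + (s:ℂ) * ρ1 + ((0:ℝ):ℂ) * ρ2)⁻¹ * ρ1)) + η2 * ρ1 := by
    rw [← intervalIntegral.integral_add (hFint_s 1 (by norm_num)) (hIint_s 1 htop),
        ← intervalIntegral.integral_add (hFint_s 0 (by norm_num)) (hIint_s 0 hbot)]
    have hconst : η2 * ρ1 = ∫ _ in (0:ℝ)..1, η2 * ρ1 := by simp
    rw [hconst, ← intervalIntegral.integral_add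
      ((hFint_s 0 (by norm_num)).add (hIint_s 0 hbot)) intervalIntegrable_const]
    apply intervalIntegral.integral_congr
    intro s _
    have ht' : (v1 + (s:ℂ) * ρ1 + ((1:ℝ):ℂ) * ρ2) = (v1 + (s:ℂ) * ρ1 + ((0:ℝ):ℂ) * ρ2) + ρ2 := by
      push_cast; ring
    have hdect := hdecomp _ (htop s)
    have hdecb := hdecomp _ (hbot s)
    have hqq : ζf (v1 + (s:ℂ) * ρ1 + ((1:ℝ):ℂ) * ρ2)
        = ζf (v1 + (s:ℂ) * ρ1 + ((0:ℝ):ℂ) * ρ2) + η2 := by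
      rw [ht']; exact hq2 _ (hbot s)
    linear_combination (hqq - hdect + hdecb) * ρ1
  have e_right : ((∫ t in (0:ℝ)..1, F (v1 + ((1:ℝ):ℂ) * ρ1 + (t:ℂ) * ρ2) * ρ2) +
      (∫ t in (0:ℝ)..1, (v1 + ((1:ℝ):ℂ) * ρ1 + (t:ℂ) * ρ2)⁻¹ * ρ2)) =
      ((∫ t in (0:ℝ)..1, F (v1 + ((0:ℝ):ℂ) * ρ1 + (t:ℂ) * ρ2) * ρ2) +
      (∫ t in (0:ℝ)..1, (v1 + ((0:ℝ):ℂ) * ρ1 + (t:ℂ) * ρ2)⁻¹ * ρ2)) + η1 * ρ2 := by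
    rw [← intervalIntegral.integral_add (hFint_t 1 (by norm_num)) (hIint_t 1 hright),
        ← intervalIntegral.integral_add (hFint_t 0 (by norm_num)) (hIint_t 0 hleft)]
    have hconst : η1 * ρ2 = ∫ _ in (0:ℝ)..1, η1 * ρ2 := by simp
    rw [hconst, ← intervalIntegral.integral_add
      ((hFint_t 0 (by norm_num)).add (hIint_t 0 hleft)) intervalIntegrable_const]
    apply intervalIntegral.integral_congr
    intro t _
    have ht' : (v1 + ((1:ℝ):ℂ) * ρ1 + (t:ℂ) * ρ2) = (v1 + ((0:ℝ):ℂ) * ρ1 + (t:ℂ) * ρ2) + ρ1 := by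
      push_cast; ring
    have hdecr := hdecomp _ (hright t)
    have hdecl := hdecomp _ (hleft t)
    have hqq : ζf (v1 + ((1:ℝ):ℂ) * ρ1 + (t:ℂ) * ρ2)
        = ζf (v1 + ((0:ℝ):ℂ) * ρ1 + (t:ℂ) * ρ2) + η1 := by
      rw [ht']; exact hq1 _ (hleft t)
    linear_combination (hqq - hdecr + hdecl) * ρ2
  -- Cauchy's theorem for F on the parallelogram
  have e_green := legendre_green F U hUopen hFdiff v1 ρ1 ρ2 hsquare
  -- re/im coordinates
  have hre_xy : ∀ x y : ℝ, ((x:ℂ) * ρ1 + (y:ℂ) * ρ2).re = x * ρ1.re + y * ρ2.re := by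
    intro x y
    simp [Complex.add_re, Complex.mul_re]
  have him_xy : ∀ x y : ℝ, ((x:ℂ) * ρ1 + (y:ℂ) * ρ2).im = x * ρ1.im + y * ρ2.im := by
    intro x y
    simp [Complex.add_im, Complex.mul_im]
  -- differences of vertices
  have hv21 : v2 - v1 = ρ1 := by rw [hv2def, hv1def]; push_cast; ring
  have hv32 : v3 - v2 = ρ2 := by rw [hv3def, hv2def]; push_cast; ring
  have hv34 : v3 - v4 = ρ1 := by rw [hv3def, hv4def]; push_cast; ring
  have hv41 : v4 - v1 = ρ2 := by rw [hv4def, hv1def]; push_cast; ring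
  have hv3neg : v3 = -v1 := by rw [hv3def, hv1def]; push_cast; ring
  have hv4neg : v4 = -v2 := by rw [hv4def, hv2def]; push_cast; ring
  -- the (b-a)/a conditions for the four sides
  have him1 : (((v2 - v1) / v1)).im ≠ 0 := by
    rw [hv21]
    apply legendre_him_aux
    have hx : ρ1.im * v1.re - ρ1.re * v1.im = D / 2 := by
      rw [hv1def, hre_xy, him_xy, hDdef]; ring
    rw [hx]
    exact div_ne_zero hD two_ne_zero
  have him2 : (((v3 - v2) / v2)).im ≠ 0 := by
    rw [hv32]
    apply legendre_him_aux
    have hx : ρ2.im * v2.re - ρ2.re * v2.im = D / 2 := by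
      rw [hv2def, hre_xy, him_xy, hDdef]; ring
    rw [hx]
    exact div_ne_zero hD two_ne_zero
  have him3 : (((v3 - v4) / v4)).im ≠ 0 := by
    rw [hv34]
    apply legendre_him_aux
    have hx : ρ1.im * v4.re - ρ1.re * v4.im = -(D / 2) := by
      rw [hv4def, hre_xy, him_xy, hDdef]; ring
    rw [hx]
    exact neg_ne_zero.2 (div_ne_zero hD two_ne_zero)
  have him4 : (((v4 - v1) / v1)).im ≠ 0 := by
    rw [hv41]
    apply legendre_him_aux
    have hx : ρ2.im * v1.re - ρ2.re * v1.im = -(D / 2) := by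
      rw [hv1def, hre_xy, him_xy, hDdef]; ring
    rw [hx]
    exact neg_ne_zero.2 (div_ne_zero hD two_ne_zero)
  -- values of the four 1/z side integrals
  have e_Gb : (∫ s in (0:ℝ)..1, (v1 + (s:ℂ) * ρ1 + ((0:ℝ):ℂ) * ρ2)⁻¹ * ρ1)
      = Complex.log (v2 / v1) := by
    rw [← legendre_seg_log v1 v2 him1]
    apply intervalIntegral.integral_congr
    intro s _
    rw [hv21]
    norm_num
  have e_Gr : (∫ t in (0:ℝ)..1, (v1 + ((1:ℝ):ℂ) * ρ1 + (t:ℂ) * ρ2)⁻¹ * ρ2)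
      = Complex.log (v3 / v2) := by
    rw [← legendre_seg_log v2 v3 him2]
    apply intervalIntegral.integral_congr
    intro t _
    rw [hv32]
    have : v1 + ((1:ℝ):ℂ) * ρ1 + (t:ℂ) * ρ2 = v2 + (t:ℂ) * ρ2 := by
      rw [hv1def, hv2def]; push_cast; ring
    simp only [this]
  have e_Gt : (∫ s in (0:ℝ)..1, (v1 + (s:ℂ) * ρ1 + ((1:ℝ):ℂ) * ρ2)⁻¹ * ρ1)
      = Complex.log (v3 / v4) := by
    rw [← legendre_seg_log v4 v3 him3]
    apply intervalIntegral.integral_congr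
    intro s _
    rw [hv34]
    have : v1 + (s:ℂ) * ρ1 + ((1:ℝ):ℂ) * ρ2 = v4 + (s:ℂ) * ρ1 := by
      rw [hv1def, hv4def]; push_cast; ring
    simp only [this]
  have e_Gl : (∫ t in (0:ℝ)..1, (v1 + ((0:ℝ):ℂ) * ρ1 + (t:ℂ) * ρ2)⁻¹ * ρ2)
      = Complex.log (v4 / v1) := by
    rw [← legendre_seg_log v1 v4 him4]
    apply intervalIntegral.integral_congr
    intro t _
    rw [hv41]
    norm_num
  -- the key identity
  have key : η1 * ρ2 - η2 * ρ1 = Complex.log (v2 / v1) + Complex.log (v3 / v2)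
      - Complex.log (v3 / v4) - Complex.log (v4 / v1) := by
    linear_combination (-1 : ℂ) * e_right + e_top + e_green + e_Gb + e_Gr - e_Gt - e_Gl
  -- rewrite the four quotients in terms of w = v2 / v1
  have hv1ne : v1 ≠ 0 := by
    apply hnotΛ_ne
    rw [hv1def]
    exact hnotΛ _ _ (Or.inl (by norm_num))
  have hq_r : v3 / v2 = -((v2 / v1)⁻¹) := by rw [hv3neg, inv_div, neg_div]
  have hq_t : v3 / v4 = (v2 / v1)⁻¹ := by rw [hv3neg, hv4neg, inv_div, neg_div_neg_eq]
  have hq_l : v4 / v1 = -(v2 / v1) := by rw [hv4neg, neg_div]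
  rw [hq_r, hq_t, hq_l] at key
  -- the sign of the imaginary parts
  have hv1re : v1.re = -(1/2) * ρ1.re + -(1/2) * ρ2.re := by rw [hv1def, hre_xy]
  have hv1im : v1.im = -(1/2) * ρ1.im + -(1/2) * ρ2.im := by rw [hv1def, him_xy]
  have hv2re : v2.re = (1/2) * ρ1.re + -(1/2) * ρ2.re := by rw [hv2def, hre_xy]
  have hv2im : v2.im = (1/2) * ρ1.im + -(1/2) * ρ2.im := by rw [hv2def, him_xy]
  have him_w : (v2 / v1).im = (D / 2) / Complex.normSq v1 := by
    rw [Complex.div_im, div_sub_div_same]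
    congr 1
    rw [hv1re, hv1im, hv2re, hv2im, hDdef]
    ring
  have him_ρ : (ρ2 / ρ1).im = D / Complex.normSq ρ1 := by
    rw [Complex.div_im, div_sub_div_same, hDdef]
  rcases lt_or_gt_of_ne hD with hDneg | hDpos
  · -- D < 0 : the relation is -2πi, and Im(ρ2/ρ1) < 0
    have hwim : (v2 / v1).im < 0 := by
      rw [him_w]
      exact div_neg_of_neg_of_pos (by linarith) (Complex.normSq_pos.2 hv1ne)
    have key2 := key.trans (legendre_log4_neg (v2 / v1) hwim)
    constructor
    · exact Or.inr (by linear_combination key2)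
    · intro hpos
      exfalso
      rw [him_ρ] at hpos
      have : D / Complex.normSq ρ1 < 0 :=
        div_neg_of_neg_of_pos hDneg (Complex.normSq_pos.2 hρ1)
      linarith
  · -- D > 0 : the relation is 2πi
    have hwim : 0 < (v2 / v1).im := by
      rw [him_w]
      exact div_pos (by linarith) (Complex.normSq_pos.2 hv1ne)
    have key2 := key.trans (legendre_log4_pos (v2 / v1) hwim)
    exact ⟨Or.inl (by linear_combination key2), fun _ => by linear_combination key2⟩
end
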